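/- arXiv:1107.1887 — 4 statements merged into one kernel-verified Lean document; each statement's English description precedes it below -/
import Mathlib

section
/- Let p be an odd prime and let u : ℤ/pℤ → ℂ be any CAZAC sequence. Then the maximum of |A_p(u)[m,n]| over all (m,n) ∈ (ℤ/pℤ × ℤ/pℤ) \ {(0,0)} is at least 1/√(p-1). -/
open scoped BigOperators Classical

noncomputable section

/-- The Legendre symbol modulo `p`, viewed as a complex-valued function on `ZMod p`:
`1` on nonzero quadratic residues, `0` at `0`, `-1` on quadratic nonresidues. -/
def chi (p : ℕ) (k : ZMod p) : ℂ :=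
  if k = 0 then 0 else if ∃ m : ZMod p, m ^ 2 = k then 1 else -1

/-- The Legendre symbol modulo `p`, viewed as an integer-valued function on `ZMod p`. -/
def chiZ (p : ℕ) (k : ZMod p) : ℤ :=
  if k = 0 then 0 else if ∃ m : ZMod p, m ^ 2 = k then 1 else -1

/-- The discrete periodic (narrow band) ambiguity function
`A_p(u)[m,n] = (1/p) ∑_k u[k+m] conj(u[k]) e^{-2πi k n/p}`. -/
def ambig (p : ℕ) [NeZero p] (u : ZMod p → ℂ) (m n : ZMod p) : ℂ :=
  (1 / (p : ℂ)) * ∑ k : ZMod p,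
    u (k + m) * (starRingEnd ℂ) (u k) *
      Complex.exp (-2 * Real.pi * Complex.I * (k.val : ℂ) * (n.val : ℂ) / (p : ℂ))

/-- The Kloosterman sum `K[a,b;p] = ∑_{x ∈ (ℤ/pℤ)ˣ} e^{2πi(ax + b x⁻¹)/p}`. -/
def kloost (p : ℕ) [NeZero p] (a b : ℤ) : ℂ :=
  ∑ x : (ZMod p)ˣ,
    Complex.exp (2 * Real.pi * Complex.I *
      ((((a : ZMod p) * (x : ZMod p) + (b : ZMod p) * ((x⁻¹ : (ZMod p)ˣ) : ZMod p)).val : ℂ))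
        / (p : ℂ))

/-- The Björck sequence of length `p` for a prime `p ≡ 1 (mod 4)`:
`u[k] = exp(iθχ(k))` with `θ = arccos (1/(1+√p))`. -/
def bjorck1 (p : ℕ) (k : ZMod p) : ℂ :=
  Complex.exp (Complex.I * (Real.arccos (1 / (1 + Real.sqrt p)) : ℂ) * chi p k)

/-- The Björck sequence of length `p` for a prime `p ≡ 3 (mod 4)`:
`u[k] = exp(iφ)` with `φ = arccos ((1-p)/(1+p))` if `k` is a quadratic nonresidue,
and `u[k] = 1` otherwise. -/
def bjorck3 (p : ℕ) (k : ZMod p) : ℂ :=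
  if ∀ m : ZMod p, m ^ 2 ≠ k then
    Complex.exp (Complex.I * (Real.arccos ((1 - (p : ℝ)) / (1 + (p : ℝ))) : ℂ))
  else 1

end
/-!
For a fixed delay `m`, `n ↦ p · A_p(u)[m,n]` is the discrete Fourier transform of the lag product
`k ↦ u[k+m] · conj(u[k])`, which is unimodular when `u` is. Parseval's identity therefore gives
`∑ₙ |A_p(u)[m,n]|² = 1`. For `m ≠ 0` the term `n = 0` is the autocorrelation at lag `m`, which
vanishes, so one of the remaining `p - 1` terms is at least `1/(p-1)`.
-/

namespace ZMod

open Finset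

variable {N : ℕ} [NeZero N]

lemma conj_stdAddChar (x : ZMod N) : (starRingEnd ℂ) (stdAddChar x) = stdAddChar (-x) := by
  rw [stdAddChar_apply, stdAddChar_apply, AddChar.map_neg_eq_inv, Circle.coe_inv_eq_conj]

lemma sum_sq_norm_dft (Φ : ZMod N → ℂ) : ∑ k, ‖𝓕 Φ k‖ ^ 2 = N * ∑ j, ‖Φ j‖ ^ 2 := by
  apply Complex.ofReal_injective
  push_cast
  simp_rw [← Complex.mul_conj', dft_apply, smul_eq_mul, map_sum, map_mul, conj_stdAddChar,
    sum_mul_sum, mul_sum]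
  rw [sum_comm]
  refine sum_congr rfl fun j _ => ?_
  rw [sum_comm]
  have orthogonality (i : ZMod N) :
      ∑ k : ZMod N, stdAddChar (k * (i - j)) = if i - j = 0 then (N : ℂ) else 0 := by
    simpa using AddChar.sum_mulShift (i - j) (isPrimitive_stdAddChar N)
  calc _ = ∑ i, Φ j * (starRingEnd ℂ) (Φ i) * ∑ k : ZMod N, stdAddChar (k * (i - j)) := by
        refine sum_congr rfl fun i _ => ?_
        rw [mul_sum]
        refine sum_congr rfl fun k _ => ?_
        rw [mul_sub, sub_eq_neg_add, AddChar.map_add_eq_mul]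
        ring_nf
    _ = N * (Φ j * (starRingEnd ℂ) (Φ j)) := by
        simp [orthogonality, sub_eq_zero, mul_comm]

end ZMod

section Ambiguity

open Finset ZMod

variable {N : ℕ} [NeZero N] (u : ZMod N → ℂ)

lemma ambig_eq_dft (m n : ZMod N) :
    ambig N u m n = (N : ℂ)⁻¹ * 𝓕 (fun k => u (k + m) * (starRingEnd ℂ) (u k)) n := by
  rw [ambig, dft_apply, one_div]
  congr 1
  refine sum_congr rfl fun k _ => ?_
  have hphase : -(k * n) = (((-(k.val * n.val : ℕ) : ℤ)) : ZMod N) := by simp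
  rw [smul_eq_mul, mul_comm, hphase, stdAddChar_coe]
  push_cast
  ring_nf

lemma ambig_zero_right (m : ZMod N) :
    ambig N u m 0 = (1 / (N : ℂ)) * ∑ k, u (m + k) * (starRingEnd ℂ) (u k) := by
  simp [ambig, add_comm]

variable {u}

lemma sum_sq_norm_ambig (hu : ∀ k, ‖u k‖ = 1) (m : ZMod N) :
    ∑ n, ‖ambig N u m n‖ ^ 2 = 1 := by
  have hN : (N : ℝ) ≠ 0 := NeZero.ne _
  simp_rw [ambig_eq_dft, norm_mul, mul_pow, ← mul_sum, sum_sq_norm_dft, norm_mul,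
    Complex.norm_conj, hu]
  simp only [norm_inv, Complex.norm_natCast, mul_one, one_pow, sum_const, card_univ, ZMod.card,
    nsmul_eq_mul]
  field_simp

lemma exists_inv_sqrt_le_norm_ambig (hu : ∀ k, ‖u k‖ = 1) {m : ZMod N}
    (hm : ambig N u m 0 = 0) : ∃ n, 1 / √((N : ℝ) - 1) ≤ ‖ambig N u m n‖ := by
  have hsum : ∑ n ∈ univ.erase 0, ‖ambig N u m n‖ ^ 2 = 1 := by
    rw [← sum_sq_norm_ambig hu m, ← add_sum_erase _ _ (mem_univ 0), hm, norm_zero]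
    ring
  have hne : (univ.erase (0 : ZMod N)).Nonempty :=
    nonempty_of_sum_ne_zero (hsum ▸ one_ne_zero)
  have hcard : ((univ.erase (0 : ZMod N)).card : ℝ) = N - 1 := by
    rw [card_erase_of_mem (mem_univ _), card_univ, ZMod.card, Nat.cast_pred (NeZero.pos N)]
  have hpos : (0 : ℝ) < N - 1 := hcard ▸ Nat.cast_pos.mpr hne.card_pos
  obtain ⟨n, -, hn⟩ := exists_le_of_sum_le hne (f := fun _ => 1 / ((N : ℝ) - 1))
    (g := fun n => ‖ambig N u m n‖ ^ 2)
    (by rw [sum_const, nsmul_eq_mul, hcard, hsum, mul_one_div_cancel hpos.ne'])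
  refine ⟨n, ?_⟩
  rw [one_div, ← Real.sqrt_inv, ← Real.sqrt_sq (norm_nonneg (ambig N u m n)), ← one_div]
  exact Real.sqrt_le_sqrt hn

end Ambiguity

theorem cazac_ambiguity_lower_bound_general
    (p : ℕ) [hp : Fact p.Prime] (u : ZMod p → ℂ)
    (hCA : ∀ k : ZMod p, ‖u k‖ = 1)
    (hZAC : ∀ m : ZMod p, m ≠ 0 →
      (1 / (p : ℂ)) * ∑ k : ZMod p, u (m + k) * (starRingEnd ℂ) (u k) = 0) :
    ∃ m n : ZMod p, (m, n) ≠ (0, 0) ∧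
      1 / Real.sqrt ((p : ℝ) - 1) ≤ ‖ambig p u m n‖ := by
  obtain ⟨n, hn⟩ := exists_inv_sqrt_le_norm_ambig hCA
    ((ambig_zero_right u 1).trans (hZAC 1 one_ne_zero))
  exact ⟨1, n, fun h => one_ne_zero (congrArg Prod.fst h), hn⟩

theorem cazac_ambiguity_lower_bound
    (p : ℕ) [hp : Fact p.Prime] (hp2 : p ≠ 2) (u : ZMod p → ℂ)
    (hCA : ∀ k : ZMod p, ‖u k‖ = 1)
    (hZAC : ∀ m : ZMod p, m ≠ 0 →
      (1 / (p : ℂ)) * ∑ k : ZMod p, u (m + k) * (starRingEnd ℂ) (u k) = 0) :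
    ∃ m n : ZMod p, (m, n) ≠ (0, 0) ∧
      1 / Real.sqrt ((p : ℝ) - 1) ≤ ‖ambig p u m n‖ :=
  cazac_ambiguity_lower_bound_general p (hp := hp) u hCA hZAC
end

section
/- (Jacobsthal) Fix an odd prime p and an integer a not divisible by p, and let F : ℤ/pℤ → ℂ be any function. Then ∑_{x ∈ (ℤ/pℤ)^×} F[x + a x^{-1}] = ∑_{x=0}^{p-1} F[x] + ∑_{x=0}^{p-1} χ(x² - 4a) F[x], where x^{-1} denotes the multiplicative inverse of x in ℤ/pℤ and x² - 4a is computed in ℤ/pℤ. -/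
open scoped BigOperators Classical

section

open Finset

variable {K : Type*} [Field K]

lemma add_mul_inv_eq_iff_sq_eq (h2 : (2 : K) ≠ 0) {a t x : K} (hx : x ≠ 0) :
    x + a * x⁻¹ = t ↔ (2 * x - t) ^ 2 = t ^ 2 - 4 * a := by
  have h4 : (4 : K) ≠ 0 := by
    rw [show (4 : K) = 2 * 2 by norm_num]
    exact mul_ne_zero h2 h2
  have hdiv : x + a * x⁻¹ - t = (x ^ 2 - t * x + a) / x := by field_simp; ring
  have hsq : (2 * x - t) ^ 2 - (t ^ 2 - 4 * a) = 4 * (x ^ 2 - t * x + a) := by ring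
  rw [← sub_eq_zero, hdiv, div_eq_zero_iff, or_iff_left hx, ← sub_eq_zero (a := (2 * x - t) ^ 2),
    hsq, mul_eq_zero, or_iff_right h4]

variable [Fintype K] [DecidableEq K]

/-- The substitution `y = 2x - t` turns `x + a/x = t` into `y² = t² - 4a`; for `a ≠ 0` no solution
of the latter comes from `x = 0`. -/
lemma card_units_add_mul_inv_eq (h2 : (2 : K) ≠ 0) {a : K} (ha : a ≠ 0) (t : K) :
    #{x : Kˣ | (x : K) + a * ↑x⁻¹ = t} = #{y : K | y ^ 2 = t ^ 2 - 4 * a} := by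
  refine card_bij (fun x _ ↦ 2 * (x : K) - t) ?_ ?_ ?_
  · intro x hx
    simp only [mem_filter, mem_univ, true_and, Units.val_inv_eq_inv_val] at hx ⊢
    exact (add_mul_inv_eq_iff_sq_eq h2 x.ne_zero).1 hx
  · intro x _ y _ h
    exact Units.ext (mul_left_cancel₀ h2 (sub_left_inj.1 h))
  · intro y hy
    simp only [mem_filter, mem_univ, true_and] at hy
    have hx : (y + t) / 2 ≠ 0 := by
      intro h
      have hyt : y = -t := eq_neg_of_add_eq_zero_left ((div_eq_zero_iff.1 h).resolve_right h2)
      have : 2 * (2 * a) = 0 := by rw [hyt] at hy; linear_combination hy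
      exact ha (by simpa [h2] using this)
    refine ⟨Units.mk0 _ hx, ?_, by simp only [Units.val_mk0]; field_simp; ring⟩
    simp only [mem_filter, mem_univ, true_and, Units.val_inv_eq_inv_val,
      Units.val_mk0]
    rw [add_mul_inv_eq_iff_sq_eq h2 hx]
    field_simp
    linear_combination hy

theorem sum_units_add_mul_inv {M : Type*} [AddCommGroup M] (hK : ringChar K ≠ 2) {a : K}
    (ha : a ≠ 0) (f : K → M) :
    ∑ x : Kˣ, f (x + a * ↑x⁻¹) = ∑ t, (quadraticChar K (t ^ 2 - 4 * a) + 1) • f t := by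
  rw [← sum_fiberwise' _ (fun x : Kˣ ↦ (x : K) + a * ↑x⁻¹) f]
  refine sum_congr rfl fun t _ ↦ ?_
  rw [sum_const, card_units_add_mul_inv_eq (Ring.two_ne_zero hK) ha,
    ← quadraticChar_card_sqrts hK, Set.toFinset_ofPred, natCast_zsmul]

end

lemma chi_eq_quadraticChar (p : ℕ) [Fact p.Prime] (b : ZMod p) :
    chi p b = quadraticChar (ZMod p) b := by
  have hsq : (∃ m : ZMod p, m ^ 2 = b) ↔ IsSquare b := by
    simp only [IsSquare, sq, eq_comm]
  by_cases hb : b = 0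
  · simp [chi, hb]
  · by_cases hs : IsSquare b
    · simp [chi, hb, hsq.2 hs, (quadraticChar_one_iff_isSquare hb).2 hs]
    · simp [chi, hb, hsq.not.2 hs, quadraticChar_neg_one_iff_not_isSquare.2 hs]

theorem jacobsthal (p : ℕ) [hp : Fact p.Prime] (hp2 : p ≠ 2)
    (a : ℤ) (ha : ¬ (p : ℤ) ∣ a) (F : ZMod p → ℂ) :
    ∑ x : (ZMod p)ˣ, F ((x : ZMod p) + (a : ZMod p) * ((x⁻¹ : (ZMod p)ˣ) : ZMod p)) =
      ∑ x : ZMod p, F x + ∑ x : ZMod p, chi p (x ^ 2 - 4 * (a : ZMod p)) * F x := by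
  have hchar : ringChar (ZMod p) ≠ 2 := (ZMod.ringChar_zmod_n p).substr hp2
  have ha' : (a : ZMod p) ≠ 0 := by rwa [Ne, ZMod.intCast_zmod_eq_zero_iff_dvd]
  rw [sum_units_add_mul_inv hchar ha', ← Finset.sum_add_distrib]
  refine Finset.sum_congr rfl fun t _ ↦ ?_
  rw [chi_eq_quadraticChar, zsmul_eq_mul]
  push_cast
  ring
end

section
/- Fix an odd prime p, let χ be the Legendre symbol modulo p viewed as a complex-valued sequence on ℤ/pℤ, and fix m, n ∈ ℤ/pℤ \ {0}. Let a, b ∈ ℤ/pℤ be the unique elements with 16a = (mn)² and 2b = m in ℤ/pℤ. Then A_p(χ)[m,n] = (e^{2πi b̃ ñ/p}/p) · K[1, ã; p], where b̃, ñ, ã ∈ {0,1,...,p-1} are the integer representatives of b, n, a. -/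
open scoped BigOperators Classical

noncomputable section Aux

open Finset

/-- The quadratic character of `ZMod p`, valued in `ℂ`. -/
def Xc (p : ℕ) [Fact p.Prime] : MulChar (ZMod p) ℂ :=
  (quadraticChar (ZMod p)).ringHomComp (Int.castRingHom ℂ)

lemma chi_eq_Xc (p : ℕ) [Fact p.Prime] (k : ZMod p) : chi p k = Xc p k := by
  have hiff : (∃ m : ZMod p, m ^ 2 = k) ↔ IsSquare k := by
    constructor
    · rintro ⟨m, rfl⟩; exact ⟨m, (sq m)⟩
    · rintro ⟨r, rfl⟩; exact ⟨r, sq r⟩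
  simp only [chi, Xc, MulChar.ringHomComp_apply, quadraticChar_apply, quadraticCharFun, hiff]
  split_ifs <;> simp

lemma Xc_count (p : ℕ) [hp : Fact p.Prime] (hp2 : p ≠ 2) (u : ZMod p) :
    Xc p u = (∑ y : ZMod p, if y ^ 2 = u then (1 : ℂ) else 0) - 1 := by
  have hF : ringChar (ZMod p) ≠ 2 := by rw [ZMod.ringChar_zmod_n]; exact hp2
  have h := quadraticChar_card_sqrts hF u
  have hcard : {x : ZMod p | x ^ 2 = u}.toFinset = univ.filter (fun y => y ^ 2 = u) := by
    ext x; simp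
  rw [hcard] at h
  have hsum : (∑ y : ZMod p, if y ^ 2 = u then (1 : ℂ) else 0)
      = ((univ.filter (fun y : ZMod p => y ^ 2 = u)).card : ℂ) := by
    simp [Finset.sum_ite_eq, Finset.sum_boole]
  rw [hsum]
  have : (quadraticChar (ZMod p)) u = ((univ.filter (fun y : ZMod p => y ^ 2 = u)).card : ℤ) - 1 := by
    omega
  simp only [Xc, MulChar.ringHomComp_apply, this]
  rw [map_sub, map_one, eq_intCast]
  push_cast
  ring

end Aux

open Finset in
theorem legendre_ambiguity_eq_kloosterman (p : ℕ) [hp : Fact p.Prime] (hp2 : p ≠ 2)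
    (m n : ZMod p) (hm : m ≠ 0) (hn : n ≠ 0)
    (a b : ZMod p) (ha : 16 * a = (m * n) ^ 2) (hb : 2 * b = m) :
    ambig p (chi p) m n =
      Complex.exp (2 * Real.pi * Complex.I * (b.val : ℂ) * (n.val : ℂ) / (p : ℂ)) / (p : ℂ) *
        kloost p 1 (a.val : ℤ) := by
  classical
  have hp2' : (2 : ZMod p) ≠ 0 := by
    have h2 : ((2 : ℕ) : ZMod p) ≠ 0 := by
      rw [Ne, ZMod.natCast_eq_zero_iff]
      exact fun h => hp2 ((Nat.prime_dvd_prime_iff_eq hp.out Nat.prime_two).mp h)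
    simpa using h2
  set ψ : AddChar (ZMod p) ℂ := ZMod.stdAddChar (N := p) with hψdef
  have hψexp : ∀ j : ℤ, Complex.exp (2 * Real.pi * Complex.I * (j : ℂ) / (p : ℂ))
      = ψ ((j : ZMod p)) := fun j => (ZMod.stdAddChar_coe j).symm
  have hψint : ∀ (j : ℤ) (w : ZMod p), (Int.cast j : ZMod p) = w →
      Complex.exp (2 * Real.pi * Complex.I * (Int.cast j : ℂ) / (p : ℂ)) = ψ w := by
    intro j w hw; rw [← hw]; exact hψexp j
  have hψval : ∀ w : ZMod p,
      Complex.exp (2 * Real.pi * Complex.I * ((w.val : ℕ) : ℂ) / (p : ℂ)) = ψ w := by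
    intro w
    have h1 : (((w.val : ℕ) : ℂ)) = (((w.val : ℤ) : ℂ)) := by push_cast; ring
    rw [h1, hψexp]
    congr 1
    push_cast [ZMod.natCast_zmod_val]
    rfl
  have hψne : ψ ≠ 0 := by
    have hprim := ZMod.isPrimitive_stdAddChar p
    have h1 : (1 : ZMod p) ≠ 0 := one_ne_zero
    have h2 := hprim h1
    rw [AddChar.mulShift_one] at h2
    rw [← AddChar.one_eq_zero]
    exact h2
  -- basic element facts
  have hbne : b ≠ 0 := fun h => hm (by rw [← hb, h, mul_zero])
  set c : ZMod p := -(n * 2⁻¹) with hc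
  have hcne : c ≠ 0 := by
    rw [hc, neg_ne_zero]
    exact mul_ne_zero hn (inv_ne_zero hp2')
  have hnc : n = -(2 * c) := by
    rw [hc]
    field_simp
  have ha' : a = b * b * (c * c) := by
    have h16 : (16 : ZMod p) ≠ 0 := by
      have h : (16 : ZMod p) = 2 ^ 4 := by norm_num
      rw [h]; exact pow_ne_zero _ hp2'
    apply mul_left_cancel₀ h16
    rw [ha, ← hb, hnc]; ring
  have hm2 : m = b + b := by rw [← hb]; ring
  -- rewrite the exponential appearing in ambig
  have hexp : ∀ k : ZMod p,
      Complex.exp (-2 * Real.pi * Complex.I * (k.val : ℂ) * (n.val : ℂ) / (p : ℂ))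
        = ψ (-(k * n)) := by
    intro k
    have h1 : (-2 * Real.pi * Complex.I * (k.val : ℂ) * (n.val : ℂ) / (p : ℂ))
        = 2 * Real.pi * Complex.I * (Int.cast (-((k.val : ℤ) * (n.val : ℤ))) : ℂ) / (p : ℂ) := by
      push_cast; ring
    rw [h1]
    exact hψint _ _ (by push_cast [ZMod.natCast_zmod_val]; ring)
  have hconj : ∀ k : ZMod p, (starRingEnd ℂ) (chi p k) = chi p k := by
    intro k; unfold chi; split_ifs <;> simp
  -- Kloosterman sum in terms of ψ
  have hkl : kloost p 1 (a.val : ℤ)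
      = ∑ x ∈ univ.filter (fun x : ZMod p => x ≠ 0), ψ (x + a * x⁻¹) := by
    unfold kloost
    have step : ∀ x : (ZMod p)ˣ,
        Complex.exp (2 * Real.pi * Complex.I *
          (((((1 : ℤ) : ZMod p) * (x : ZMod p) +
            (((a.val : ℤ)) : ZMod p) * ((x⁻¹ : (ZMod p)ˣ) : ZMod p)).val : ℂ)) / (p : ℂ))
          = ψ ((x : ZMod p) + a * ((x : ZMod p))⁻¹) := by
      intro x
      rw [hψval]
      congr 1
      push_cast [ZMod.natCast_zmod_val]
      ring
    rw [Finset.sum_congr rfl fun x _ => step x]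
    refine Finset.sum_nbij' (i := fun x : (ZMod p)ˣ => (x : ZMod p))
      (j := fun x : ZMod p => if h : x = 0 then 1 else Units.mk0 x h) ?_ ?_ ?_ ?_ ?_
    · intro x _
      simp [x.ne_zero]
    · intro x hx
      simp
    · intro x _
      simp [x.ne_zero]
    · intro x hx
      simp only [mem_filter, mem_univ, true_and] at hx
      simp [hx]
    · intro x _
      rfl
  -- vanishing of the plain character sum
  have hv : (∑ t : ZMod p, ψ (-(t * n))) = 0 := by
    have he : (∑ t : ZMod p, ψ (-(t * n))) = ∑ u : ZMod p, ψ u := by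
      refine Fintype.sum_equiv ((Equiv.mulRight₀ n hn).trans (Equiv.neg _)) _ _ fun t => ?_
      rfl
    rw [he]
    exact AddChar.sum_eq_zero_iff_ne_zero.mpr hψne
  -- Step 1: shift k = t - b
  have step1 : (∑ k : ZMod p, Xc p (k + m) * Xc p k * ψ (-(k * n)))
      = ∑ t : ZMod p, Xc p (t ^ 2 - b ^ 2) * (ψ (b * n) * ψ (-(t * n))) := by
    refine Fintype.sum_equiv (Equiv.addRight b) _ _ fun k => ?_
    simp only [Equiv.coe_addRight]
    rw [show (k + b) ^ 2 - b ^ 2 = (k + m) * k by rw [hm2]; ring, map_mul]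
    rw [← AddChar.map_add_eq_mul, show b * n + -((k + b) * n) = -(k * n) by ring]
  -- Step 2: expand the quadratic character as a point count
  have step2 : (∑ t : ZMod p, Xc p (t ^ 2 - b ^ 2) * ψ (-(t * n)))
      = ∑ z ∈ univ.filter (fun z : ZMod p × ZMod p => z.2 ^ 2 = z.1 ^ 2 - b ^ 2),
          ψ (-(z.1 * n)) := by
    calc (∑ t : ZMod p, Xc p (t ^ 2 - b ^ 2) * ψ (-(t * n)))
        = ∑ t : ZMod p, ((∑ y : ZMod p, if y ^ 2 = t ^ 2 - b ^ 2 then (1 : ℂ) else 0)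
            * ψ (-(t * n)) - ψ (-(t * n))) := by
          refine Finset.sum_congr rfl fun t _ => ?_
          rw [Xc_count p hp2]; ring
      _ = (∑ t : ZMod p, (∑ y : ZMod p, if y ^ 2 = t ^ 2 - b ^ 2 then (1 : ℂ) else 0)
            * ψ (-(t * n))) - ∑ t : ZMod p, ψ (-(t * n)) := by
          rw [Finset.sum_sub_distrib]
      _ = ∑ t : ZMod p, ∑ y : ZMod p,
            (if y ^ 2 = t ^ 2 - b ^ 2 then ψ (-(t * n)) else 0) := by
          rw [hv, sub_zero]
          refine Finset.sum_congr rfl fun t _ => ?_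
          rw [Finset.sum_mul]
          refine Finset.sum_congr rfl fun y _ => ?_
          split_ifs <;> simp
      _ = ∑ z ∈ univ.filter (fun z : ZMod p × ZMod p => z.2 ^ 2 = z.1 ^ 2 - b ^ 2),
            ψ (-(z.1 * n)) := by
          rw [Finset.sum_filter, Fintype.sum_prod_type]
  -- Step 3: the bijection with the Kloosterman sum
  have hsne : ∀ z : ZMod p × ZMod p, z.2 ^ 2 = z.1 ^ 2 - b ^ 2 → z.1 + z.2 ≠ 0 := by
    intro z hz h0
    apply hbne
    have hb2 : b ^ 2 = (z.1 + z.2) * (z.1 - z.2) := by linear_combination hz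
    rw [h0, zero_mul] at hb2
    exact (pow_eq_zero_iff (by norm_num : (2 : ℕ) ≠ 0)).mp hb2
  have step3 : (∑ z ∈ univ.filter (fun z : ZMod p × ZMod p => z.2 ^ 2 = z.1 ^ 2 - b ^ 2),
          ψ (-(z.1 * n)))
      = ∑ x ∈ univ.filter (fun x : ZMod p => x ≠ 0), ψ (x + a * x⁻¹) := by
    refine Finset.sum_nbij' (i := fun z : ZMod p × ZMod p => c * (z.1 + z.2))
      (j := fun x : ZMod p =>
        ((c⁻¹ * x + b * b * c * x⁻¹) * 2⁻¹, (c⁻¹ * x - b * b * c * x⁻¹) * 2⁻¹))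
      ?_ ?_ ?_ ?_ ?_
    · intro z hz
      simp only [mem_filter, mem_univ, true_and] at hz ⊢
      exact mul_ne_zero hcne (hsne z hz)
    · intro x hx
      simp only [mem_filter, mem_univ, true_and] at hx ⊢
      field_simp
      ring
    · intro z hz
      simp only [mem_filter, mem_univ, true_and] at hz
      have hs := hsne z hz
      have hb2 : b * b = (z.1 + z.2) * (z.1 - z.2) := by linear_combination hz
      have h1 : (c⁻¹ * (c * (z.1 + z.2)) + b * b * c * (c * (z.1 + z.2))⁻¹) * 2⁻¹ = z.1 := by
        rw [hb2]
        field_simp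
        ring
      have h2 : (c⁻¹ * (c * (z.1 + z.2)) - b * b * c * (c * (z.1 + z.2))⁻¹) * 2⁻¹ = z.2 := by
        rw [hb2]
        field_simp
        ring
      exact Prod.ext h1 h2
    · intro x hx
      simp only [mem_filter, mem_univ, true_and] at hx
      field_simp
      ring
    · intro z hz
      simp only [mem_filter, mem_univ, true_and] at hz
      have hs := hsne z hz
      have hb2 : b * b = (z.1 + z.2) * (z.1 - z.2) := by linear_combination hz
      congr 1
      rw [ha', hb2, hnc]
      field_simp
      ring
  -- assemble
  have hsummand : ∀ k : ZMod p,
      chi p (k + m) * (starRingEnd ℂ) (chi p k) *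
        Complex.exp (-2 * Real.pi * Complex.I * (k.val : ℂ) * (n.val : ℂ) / (p : ℂ))
      = Xc p (k + m) * Xc p k * ψ (-(k * n)) := by
    intro k
    rw [hconj, hexp, chi_eq_Xc, chi_eq_Xc]
  have hbn : Complex.exp (2 * Real.pi * Complex.I * (b.val : ℂ) * (n.val : ℂ) / (p : ℂ))
      = ψ (b * n) := by
    have h1 : (2 * Real.pi * Complex.I * (b.val : ℂ) * (n.val : ℂ) / (p : ℂ))
        = 2 * Real.pi * Complex.I * (Int.cast ((b.val : ℤ) * (n.val : ℤ)) : ℂ) / (p : ℂ) := by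
      push_cast; ring
    rw [h1]
    exact hψint _ _ (by push_cast [ZMod.natCast_zmod_val]; ring)
  unfold ambig
  rw [Finset.sum_congr rfl fun k _ => hsummand k, step1]
  have hfac : (∑ t : ZMod p, Xc p (t ^ 2 - b ^ 2) * (ψ (b * n) * ψ (-(t * n))))
      = ψ (b * n) * ∑ t : ZMod p, Xc p (t ^ 2 - b ^ 2) * ψ (-(t * n)) := by
    rw [Finset.mul_sum]
    refine Finset.sum_congr rfl fun t _ => ?_
    ring
  rw [hfac, step2, step3, hkl, hbn]
  ring
end

section
/- Let p be a prime with p ≡ 3 (mod 4) and let u_p be the Björck sequence of length p. Then u_p is a CAZAC sequence: |u_p[k]| = 1 for all k ∈ ℤ/pℤ, and (1/p) ∑_{k=0}^{p-1} u_p[m+k] · conj(u_p[k]) = 0 for all m ∈ ℤ/pℤ \ {0}. -/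
open scoped BigOperators Classical

/-!
Write `u = 1 + (ω - 1)·1_N` with `N` the set of nonresidues and `ω = exp(iφ)`. Expanding, the
autocorrelation sum at a shift `m` is `p - (2 - 2 cos φ)(|N| - λ)`, where `λ` counts the `k` with
`k, m + k ∈ N`. Since `2·1_N = 1 - χ - δ₀`, counting `λ` reduces to the Jacobi sum
`∑ₖ χ(m + k) χ(k) = -1`; with `χ(-1) = -1` this gives `λ = (p - 3)/4` for `m ≠ 0` (the nonresidues
form a Paley difference set). So `|N| - λ = (p + 1)/4`, and `cos φ = (1 - p)/(1 + p)` is exactly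
the value making `(2 - 2 cos φ)(p + 1)/4 = p`.
-/

open Finset ComplexConjugate

section TwoValued

variable {G : Type*} [AddGroup G] [Fintype G]

lemma sum_ite_mul_conj_ite (P : G → Prop) [DecidablePred P] {ω : ℂ} (hω : ‖ω‖ = 1) (m : G) :
    ∑ k, (if P (m + k) then ω else 1) * conj (if P k then ω else 1) =
      Fintype.card G - 2 * (1 - ω.re) * (#{k | P k} - #{k | P k ∧ P (m + k)}) := by
  have expand (k : G) : (if P (m + k) then ω else 1) * conj (if P k then ω else 1) =
      1 + (ω - 1) * (if P (m + k) then 1 else 0) + (conj ω - 1) * (if P k then 1 else 0)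
        + (ω - 1) * (conj ω - 1) * (if P k ∧ P (m + k) then 1 else 0) := by
    by_cases h₁ : P (m + k) <;> by_cases h₂ : P k <;> simp [h₁, h₂]; ring
  have shift : ∑ k, (if P (m + k) then (1 : ℂ) else 0) = ∑ k, if P k then 1 else 0 :=
    Fintype.sum_equiv (Equiv.addLeft m) _ _ fun _ => rfl
  have hnorm : ω * conj ω = 1 := by
    rw [Complex.mul_conj, Complex.normSq_eq_norm_sq, hω]; norm_num
  have hre : (ω.re : ℂ) = (ω + conj ω) / 2 := by
    rw [Complex.add_conj]; push_cast; ring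
  simp only [expand, sum_add_distrib, ← mul_sum, shift, sum_boole, sum_const, card_univ,
    nsmul_eq_mul, mul_one, hre]
  linear_combination (#{k | P k ∧ P (m + k)} : ℂ) * hnorm

end TwoValued

section FiniteField

variable {F : Type*} [Field F] [Fintype F]

lemma ringChar_ne_two_of_card_mod_four (hF4 : Fintype.card F % 4 = 3) : ringChar F ≠ 2 :=
  fun h => by have := FiniteField.even_card_of_char_two h; omega

variable [DecidableEq F]

lemma quadraticChar_neg_of_card_mod_four (hF4 : Fintype.card F % 4 = 3) (a : F) :
    quadraticChar F (-a) = -quadraticChar F a := by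
  have hneg_one : quadraticChar F (-1) = -1 := quadraticChar_neg_one_iff_not_isSquare.mpr
    (mt FiniteField.isSquare_neg_one_iff.mp (not_not.mpr hF4))
  rw [neg_eq_neg_one_mul a, map_mul, hneg_one, neg_one_mul]

lemma two_mul_ite_not_isSquare (a : F) :
    2 * (if ¬IsSquare a then 1 else 0 : ℤ) = 1 - quadraticChar F a - if a = 0 then 1 else 0 := by
  by_cases h0 : a = 0
  · simp [h0]
  by_cases hs : IsSquare a
  · simp [hs, h0, (quadraticChar_one_iff_isSquare h0).mpr hs]
  · simp [hs, h0, quadraticChar_neg_one_iff_not_isSquare.mpr hs]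

section OddCharacteristic

variable (hF : ringChar F ≠ 2)
include hF

lemma sum_quadraticChar_add_mul {m : F} (hm : m ≠ 0) :
    ∑ k, quadraticChar F (m + k) * quadraticChar F k = -1 := by
  have hJ := jacobiSum_nontrivial_inv (quadraticChar_ne_one hF)
  rw [(quadraticChar_isQuadratic F).inv, jacobiSum] at hJ
  have hsq {a : F} (ha : a ≠ 0) : quadraticChar F a * quadraticChar F a = 1 := by
    rw [← sq]; exact quadraticChar_sq_one ha
  calc ∑ k, quadraticChar F (m + k) * quadraticChar F k
      = ∑ x, quadraticChar F (m + -m * x) * quadraticChar F (-m * x) :=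
        (Fintype.sum_equiv (Equiv.mulLeft₀ (-m) (neg_ne_zero.mpr hm)) _ _ fun _ => rfl).symm
    _ = ∑ x, quadraticChar F (-1) * (quadraticChar F x * quadraticChar F (1 - x)) := by
        refine sum_congr rfl fun x _ => ?_
        rw [show m + -m * x = m * (1 - x) by ring, show -m * x = -1 * m * x by ring]
        simp only [map_mul]
        linear_combination
          (quadraticChar F (-1) * quadraticChar F x * quadraticChar F (1 - x)) * hsq hm
    _ = -1 := by
        rw [← mul_sum, hJ]
        linear_combination -hsq (neg_ne_zero.mpr one_ne_zero)

lemma two_mul_card_nonsquares : 2 * (#{a : F | ¬IsSquare a} : ℤ) = Fintype.card F - 1 := by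
  rw [natCast_card_filter, mul_sum]
  simp only [two_mul_ite_not_isSquare, sum_sub_distrib, quadraticChar_sum_zero hF,
    sum_ite_eq', mem_univ, if_true, sum_const, card_univ, nsmul_eq_mul, mul_one, sub_zero]

lemma four_mul_card_nonsquare_pairs {m : F} (hm : m ≠ 0) :
    4 * (#{k : F | ¬IsSquare k ∧ ¬IsSquare (m + k)} : ℤ) =
      Fintype.card F - 3 + quadraticChar F m + quadraticChar F (-m) := by
  have expand (k : F) :
      (2 * (if ¬IsSquare k then 1 else 0 : ℤ)) * (2 * (if ¬IsSquare (m + k) then 1 else 0)) =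
        1 - quadraticChar F (m + k) - quadraticChar F k
          + quadraticChar F (m + k) * quadraticChar F k
          - (if k = -m then 1 else 0) - (if k = 0 then 1 else 0)
          + (if k = -m then quadraticChar F (-m) else 0)
          + (if k = 0 then quadraticChar F m else 0) := by
    rw [two_mul_ite_not_isSquare, two_mul_ite_not_isSquare]
    by_cases h0 : k = 0
    · subst h0; simp [hm, (neg_ne_zero.mpr hm).symm]
    by_cases h1 : k = -m
    · subst h1; simp [hm]
    · have : m + k ≠ 0 := fun h => h1 (by linear_combination h)
      simp [h0, h1, this]; ring
  have shift : ∑ k, quadraticChar F (m + k) = ∑ k, quadraticChar F k :=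
    Fintype.sum_equiv (Equiv.addLeft m) _ _ fun _ => rfl
  calc 4 * (#{k : F | ¬IsSquare k ∧ ¬IsSquare (m + k)} : ℤ)
      = ∑ k : F, (2 * (if ¬IsSquare k then 1 else 0 : ℤ)) *
          (2 * (if ¬IsSquare (m + k) then 1 else 0)) := by
        rw [natCast_card_filter, mul_sum]
        refine sum_congr rfl fun k _ => ?_
        rw [mul_mul_mul_comm, ite_zero_mul_ite_zero, mul_one]; norm_num
    _ = Fintype.card F - 3 + quadraticChar F m + quadraticChar F (-m) := by
        simp only [expand, sum_add_distrib, sum_sub_distrib, shift, quadraticChar_sum_zero hF,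
          sum_quadraticChar_add_mul hF hm, sum_ite_eq', mem_univ, if_true, sum_const, card_univ,
          nsmul_eq_mul, mul_one]
        ring

end OddCharacteristic

lemma four_mul_card_nonsquare_pairs_of_card_mod_four (hF4 : Fintype.card F % 4 = 3) {m : F}
    (hm : m ≠ 0) : 4 * (#{k : F | ¬IsSquare k ∧ ¬IsSquare (m + k)} : ℤ) = Fintype.card F - 3 := by
  rw [four_mul_card_nonsquare_pairs (ringChar_ne_two_of_card_mod_four hF4) hm,
    quadraticChar_neg_of_card_mod_four hF4, add_neg_cancel_right]

end FiniteField

lemma bjorck3_eq_ite (p : ℕ) [NeZero p] (k : ZMod p) :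
    bjorck3 p k = if ¬IsSquare k then
      Complex.exp (Complex.I * (Real.arccos ((1 - (p : ℝ)) / (1 + (p : ℝ))) : ℂ)) else 1 := by
  rw [bjorck3]; congr 1; simp only [isSquare_iff_exists_sq, not_exists, ne_eq, eq_comm]

theorem bjorck3_cazac (p : ℕ) [hp : Fact p.Prime] (hp4 : p % 4 = 3) :
    (∀ k : ZMod p, ‖bjorck3 p k‖ = 1) ∧
      ∀ m : ZMod p, m ≠ 0 →
        (1 / (p : ℂ)) *
          ∑ k : ZMod p, bjorck3 p (m + k) * (starRingEnd ℂ) (bjorck3 p k) = 0 := by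
  set φ := Real.arccos ((1 - (p : ℝ)) / (1 + (p : ℝ)))
  have hu (k : ZMod p) : bjorck3 p k = if ¬IsSquare k then Complex.exp (Complex.I * φ) else 1 :=
    bjorck3_eq_ite p k
  have hω : ‖Complex.exp (Complex.I * φ)‖ = 1 := Complex.norm_exp_I_mul_ofReal φ
  refine ⟨fun k => by rw [hu]; split_ifs <;> simp [hω], fun m hm => ?_⟩
  have hcard : Fintype.card (ZMod p) % 4 = 3 := by rwa [ZMod.card]
  have hF := ringChar_ne_two_of_card_mod_four hcard
  have hN := congrArg (Int.cast : ℤ → ℂ) (two_mul_card_nonsquares hF)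
  have hpairs :=
    congrArg (Int.cast : ℤ → ℂ) (four_mul_card_nonsquare_pairs_of_card_mod_four hcard hm)
  push_cast [ZMod.card] at hN hpairs
  have hcos : (Complex.exp (Complex.I * φ)).re = (1 - p) / (1 + p) := by
    rw [mul_comm, Complex.exp_ofReal_mul_I_re]
    exact Real.cos_arccos (by rw [le_div_iff₀ (by positivity)]; linarith)
      (by rw [div_le_one (by positivity)]; linarith)
  simp only [hu]
  rw [sum_ite_mul_conj_ite (fun k => ¬IsSquare k) hω, hcos, ZMod.card]
  have : (1 + p : ℂ) ≠ 0 := by norm_cast; omega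
  have : (p : ℂ) ≠ 0 := by norm_cast; exact hp.out.ne_zero
  push_cast
  field_simp
  linear_combination (-2 * p : ℂ) * hN + p * hpairs
end
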